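/- Weight preservation under equality patterns: if δ₁ ⇌_Δ δ₂, the semiring has idempotent addition, all relations in the relation environment γ are large-enough, and both substitutions satisfy |σᵢ(α)| ≥ #_α g(Δ) for all type variables α, then ⟦g⟧(γ; δ₁; σ₁) = ⟦g⟧(γ; δ₂; σ₂) for every well-typed goal g. -/

import Mathlib

/-- Polymorphic types: Unit, Sum, Prod, and type variables. -/
inductive PTy : Type
  | unit : PTy
  | sum : PTy → PTy → PTy
  | prod : PTy → PTy → PTy
  | var : ℕ → PTy
deriving DecidableEq

/-- Apply a type-variable substitution. -/
def psubst (σ : ℕ → PTy) : PTy → PTy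
  | .unit => .unit
  | .sum a b => .sum (psubst σ a) (psubst σ b)
  | .prod a b => .prod (psubst σ a) (psubst σ b)
  | .var n => σ n

/-- Concrete values. -/
inductive Val : Type
  | sole : Val
  | vleft : Val → Val
  | vright : Val → Val
  | vpair : Val → Val → Val
deriving DecidableEq

/-- Typing of concrete values. -/
inductive HasTy : Val → PTy → Prop
  | sole : HasTy .sole .unit
  | vleft {v a b} : HasTy v a → HasTy (.vleft v) (.sum a b)
  | vright {v a b} : HasTy v b → HasTy (.vright v) (.sum a b)
  | vpair {v w a b} : HasTy v a → HasTy w b → HasTy (.vpair v w) (.prod a b)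

/-- A type is monomorphic (contains no type variables). -/
def Mono : PTy → Prop
  | .unit => True
  | .sum a b => Mono a ∧ Mono b
  | .prod a b => Mono a ∧ Mono b
  | .var _ => False

/-- Shells: values with holes at type-variable positions. -/
inductive Shell : Type
  | sole : Shell
  | sleft : Shell → Shell
  | sright : Shell → Shell
  | spair : Shell → Shell → Shell
  | hole : ℕ → Shell
deriving DecidableEq

/-- The shell of a value at a (possibly polymorphic) type. -/
def shell : PTy → Val → Shell
  | .var n, _ => .hole n
  | .sum a _, .vleft v => .sleft (shell a v)
  | .sum _ b, .vright v => .sright (shell b v)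
  | .prod a b, .vpair v w => .spair (shell a v) (shell b w)
  | _, _ => .sole

/-- The ordered list of α-holes of a value at a type. -/
def holes (α : ℕ) : PTy → Val → List Val
  | .var n, v => if n = α then [v] else []
  | .sum a _, .vleft v => holes α a v
  | .sum _ b, .vright v => holes α b v
  | .prod a b, .vpair v w => holes α a v ++ holes α b w
  | _, _ => []

/-- Environment shells: per-variable shells. -/
def envshell (Δ : List PTy) (δ : List Val) : List Shell :=
  List.zipWith shell Δ δ

/-- Environment holes: concatenated α-holes across all variables. -/
def envholes (α : ℕ) (Δ : List PTy) (δ : List Val) : List Val :=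
  (List.zipWith (holes α) Δ δ).flatten

/-- The equality-pattern relation on value environments. -/
def EqPat (Δ : List PTy) (δ₁ δ₂ : List Val) : Prop :=
  envshell Δ δ₁ = envshell Δ δ₂ ∧
  ∀ (α : ℕ) (i j : ℕ) (h₁ k₁ h₂ k₂ : Val),
    (envholes α Δ δ₁)[i]? = some h₁ → (envholes α Δ δ₁)[j]? = some k₁ →
    (envholes α Δ δ₂)[i]? = some h₂ → (envholes α Δ δ₂)[j]? = some k₂ →
    (h₁ = k₁ ↔ h₂ = k₂)

/-- Well-typedness of a value environment: δ : σ(Δ). -/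
def EnvTy (σ : ℕ → PTy) (Δ : List PTy) (δ : List Val) : Prop :=
  List.Forall₂ (fun τ v => HasTy v (psubst σ τ)) Δ δ

/-- Value terms, possibly containing variables (de Bruijn style indices into Δ). -/
inductive Term : Type
  | sole : Term
  | tleft : Term → Term
  | tright : Term → Term
  | tpair : Term → Term → Term
  | var : ℕ → Term
deriving DecidableEq

/-- Denotation of a term under a value environment. -/
def denT : Term → List Val → Val
  | .sole, _ => .sole
  | .tleft t, δ => .vleft (denT t δ)
  | .tright t, δ => .vright (denT t δ)
  | .tpair s t, δ => .vpair (denT s δ) (denT t δ)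
  | .var n, δ => δ.getD n .sole

/-- Typing of terms under a type environment. -/
inductive TmTy : List PTy → Term → PTy → Prop
  | sole {Δ} : TmTy Δ .sole .unit
  | tleft {Δ t a b} : TmTy Δ t a → TmTy Δ (.tleft t) (.sum a b)
  | tright {Δ t a b} : TmTy Δ t b → TmTy Δ (.tright t) (.sum a b)
  | tpair {Δ s t a b} : TmTy Δ s a → TmTy Δ t b → TmTy Δ (.tpair s t) (.prod a b)
  | var {Δ n τ} : Δ[n]? = some τ → TmTy Δ (.var n) τ

/-- Maximum number of occurrences of type variable α in a type. -/
def cnt (α : ℕ) : PTy → ℕ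
  | .unit => 0
  | .sum a b => max (cnt α a) (cnt α b)
  | .prod a b => cnt α a + cnt α b
  | .var n => if n = α then 1 else 0

/-- Maximum number of occurrences of α in a type environment. -/
def cntEnv (α : ℕ) (Δ : List PTy) : ℕ := (Δ.map (cnt α)).sum

/-- Enumeration of the concrete values of a (monomorphic) type. -/
def enum : PTy → List Val
  | .unit => [.sole]
  | .sum a b => (enum a).map .vleft ++ (enum b).map .vright
  | .prod a b => (enum a).flatMap (fun v => (enum b).map (.vpair v))
  | .var _ => []

/-- Full goal language, with relation calls and `factor`. -/
inductive Goal2 (K : Type*) : Type _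
  | conj : Goal2 K → Goal2 K → Goal2 K
  | disj : Goal2 K → Goal2 K → Goal2 K
  | fresh : PTy → Goal2 K → Goal2 K
  | eq : Term → Term → Goal2 K
  | neq : Term → Term → Goal2 K
  | call : ℕ → List Term → Goal2 K
  | factor : K → Goal2 K

/-- Denotational semantics of goals under a relation environment γ and a
type-variable substitution σ. -/
def denG2 {K : Type*} [CommSemiring K] (γ : ℕ → List Val → K) (σ : ℕ → PTy) :
    Goal2 K → List Val → K
  | .conj g₁ g₂, δ => denG2 γ σ g₁ δ * denG2 γ σ g₂ δ
  | .disj g₁ g₂, δ => denG2 γ σ g₁ δ + denG2 γ σ g₂ δ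
  | .fresh τ g, δ => ((enum (psubst σ τ)).map (fun v => denG2 γ σ g (v :: δ))).sum
  | .eq v₁ v₂, δ => if denT v₁ δ = denT v₂ δ then 1 else 0
  | .neq v₁ v₂, δ => if denT v₁ δ = denT v₂ δ then 0 else 1
  | .call R ts, δ => γ R (ts.map (fun t => denT t δ))
  | .factor r, _ => r

/-- Maximum number of α-occurrences in environments reachable within a goal. -/
def cntG {K : Type*} (α : ℕ) : Goal2 K → List PTy → ℕ
  | .conj g₁ g₂, Δ => max (cntG α g₁ Δ) (cntG α g₂ Δ)
  | .disj g₁ g₂, Δ => max (cntG α g₁ Δ) (cntG α g₂ Δ)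
  | .fresh τ g, Δ => cntG α g (τ :: Δ)
  | .eq _ _, Δ => cntEnv α Δ
  | .neq _ _, Δ => cntEnv α Δ
  | .call _ _, Δ => cntEnv α Δ
  | .factor _, Δ => cntEnv α Δ

/-- Well-typedness of goals under a type environment. -/
inductive GoalTy {K : Type*} : List PTy → Goal2 K → Prop
  | conj {Δ g₁ g₂} : GoalTy Δ g₁ → GoalTy Δ g₂ → GoalTy Δ (.conj g₁ g₂)
  | disj {Δ g₁ g₂} : GoalTy Δ g₁ → GoalTy Δ g₂ → GoalTy Δ (.disj g₁ g₂)
  | fresh {Δ τ g} : GoalTy (τ :: Δ) g → GoalTy Δ (.fresh τ g)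
  | eq {Δ t₁ t₂ τ} : TmTy Δ t₁ τ → TmTy Δ t₂ τ → GoalTy Δ (.eq t₁ t₂)
  | neq {Δ t₁ t₂ τ} : TmTy Δ t₁ τ → TmTy Δ t₂ τ → GoalTy Δ (.neq t₁ t₂)
  | call {Δ R ts} : (∀ t ∈ ts, ∃ τ, TmTy Δ t τ) → GoalTy Δ (.call R ts)
  | factor {Δ r} : GoalTy Δ (.factor r)

/-- All relations in γ are large-enough: on equality-pattern-equivalent argument
environments they yield equal weights. -/
def LargeEnough {K : Type*} (γ : ℕ → List Val → K) : Prop :=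
  ∀ (Δ : List PTy) (δ₁ δ₂ : List Val), EqPat Δ δ₁ δ₂ →
    ∀ (R : ℕ) (ts : List Term),
      γ R (ts.map (fun t => denT t δ₁)) = γ R (ts.map (fun t => denT t δ₂))

section Aux
open List

lemma envty_length {σ : ℕ → PTy} {Δ : List PTy} {δ : List Val} (h : EnvTy σ Δ δ) :
    δ.length = Δ.length := h.length_eq.symm

lemma eqPat_refl (Δ : List PTy) (δ : List Val) : EqPat Δ δ δ :=
  ⟨rfl, fun _ _ _ _ _ _ _ e1 e2 e3 e4 => by
    rw [e1] at e3; rw [e2] at e4; cases e3; cases e4; exact Iff.rfl⟩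

lemma eqPat_symm {Δ : List PTy} {δ₁ δ₂ : List Val} (h : EqPat Δ δ₁ δ₂) : EqPat Δ δ₂ δ₁ :=
  ⟨h.1.symm, fun α i j h₁ k₁ h₂ k₂ e1 e2 e3 e4 => (h.2 α i j h₂ k₂ h₁ k₁ e3 e4 e1 e2).symm⟩

lemma envshell_cons (τ : PTy) (Δ : List PTy) (v : Val) (δ : List Val) :
    envshell (τ :: Δ) (v :: δ) = shell τ v :: envshell Δ δ := rfl

lemma envholes_cons (α : ℕ) (τ : PTy) (Δ : List PTy) (v : Val) (δ : List Val) :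
    envholes α (τ :: Δ) (v :: δ) = holes α τ v ++ envholes α Δ δ := rfl

lemma holes_length_of_shell_eq (α : ℕ) : ∀ (τ : PTy) (v w : Val),
    shell τ v = shell τ w → (holes α τ v).length = (holes α τ w).length := by
  intro τ
  induction τ with
  | unit => intro v w _; simp [holes]
  | var n => intro v w _; by_cases h : n = α <;> simp [holes, h]
  | sum a b iha ihb =>
    intro v w h
    cases v <;> cases w <;> simp_all [shell, holes] <;>
      first | exact iha _ _ h | exact ihb _ _ h
  | prod a b iha ihb =>
    intro v w h
    cases v <;> cases w <;> simp_all [shell, holes]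
    rw [iha _ _ h.1, ihb _ _ h.2]

end Aux
lemma envshell_get : ∀ (Δ : List PTy) (δ : List Val) (n : ℕ) (τ : PTy) (v : Val),
    Δ[n]? = some τ → δ[n]? = some v → (envshell Δ δ)[n]? = some (shell τ v) := by
  intro Δ
  induction Δ with
  | nil => simp
  | cons τ' Δ ih =>
    intro δ n τ v h1 h2
    cases δ with
    | nil => simp at h2
    | cons w δ =>
      cases n with
      | zero =>
        simp only [List.getElem?_cons_zero, Option.some.injEq] at h1 h2
        subst h1; subst h2; simp [envshell_cons]
      | succ n =>
        simpa [envshell_cons] using ih δ n τ v (by simpa using h1) (by simpa using h2)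

lemma shell_denT {Δ : List PTy} {δ δ' : List Val}
    (hl : δ.length = Δ.length) (hl' : δ'.length = Δ.length)
    (hsh : envshell Δ δ = envshell Δ δ') :
    ∀ {t : Term} {τ : PTy}, TmTy Δ t τ → shell τ (denT t δ) = shell τ (denT t δ') := by
  intro t τ ht
  induction ht with
  | sole => rfl
  | tleft _ ih => simpa [denT, shell] using ih
  | tright _ ih => simpa [denT, shell] using ih
  | tpair _ _ ih1 ih2 => simp [denT, shell, ih1, ih2]
  | @var n τ h =>
    have hn : n < Δ.length := by
      by_contra hc
      rw [List.getElem?_eq_none (by omega)] at h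
      simp at h
    have h1 : δ[n]? = some (δ[n]'(by omega)) := List.getElem?_eq_getElem _
    have h2 : δ'[n]? = some (δ'[n]'(by omega)) := List.getElem?_eq_getElem _
    have e1 := envshell_get Δ δ n τ _ h h1
    have e2 := envshell_get Δ δ' n τ _ h h2
    rw [hsh] at e1
    rw [e2] at e1
    have : denT (.var n) δ = δ[n]'(by omega) := by
      simp [denT, List.getD_eq_getElem?_getD, h1]
    have h' : denT (.var n) δ' = δ'[n]'(by omega) := by
      simp [denT, List.getD_eq_getElem?_getD, h2]
    rw [this, h']
    exact (Option.some_inj.mp e1).symm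

lemma hasTy_denT {σ : ℕ → PTy} {Δ : List PTy} {δ : List Val} (hv : EnvTy σ Δ δ) :
    ∀ {t : Term} {τ : PTy}, TmTy Δ t τ → HasTy (denT t δ) (psubst σ τ) := by
  intro t τ ht
  induction ht with
  | sole => exact .sole
  | tleft _ ih => exact .vleft ih
  | tright _ ih => exact .vright ih
  | tpair _ _ ih1 ih2 => exact .vpair ih1 ih2
  | @var n τ h =>
    have hn : n < Δ.length := by
      by_contra hc
      rw [List.getElem?_eq_none (by omega)] at h
      simp at h
    have hlen : δ.length = Δ.length := envty_length hv
    have h1 : δ[n]? = some (δ[n]'(by omega)) := List.getElem?_eq_getElem _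
    have hty := hv.get (i := n) (by omega) (by omega)
    have hτ : Δ[n] = τ := by
      simpa [List.getElem?_eq_getElem hn] using h
    simp only [List.get_eq_getElem] at hty
    rw [hτ] at hty
    have : denT (.var n) δ = δ[n]'(by omega) := by
      simp [denT, List.getD_eq_getElem?_getD, h1]
    rw [this]; exact hty

lemma holes_length_le (α : ℕ) : ∀ (τ : PTy) (v : Val), (holes α τ v).length ≤ cnt α τ := by
  intro τ
  induction τ with
  | unit => intro v; simp [holes, cnt]
  | var n => intro v; by_cases h : n = α <;> simp [holes, cnt, h]
  | sum a b iha ihb =>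
    intro v
    cases v <;> simp [holes, cnt] <;>
      first
        | exact Or.inl (iha _)
        | exact Or.inr (ihb _)
  | prod a b iha ihb =>
    intro v
    cases v <;> simp [holes, cnt]
    exact Nat.add_le_add (iha _) (ihb _)

lemma cntEnv_cons (α : ℕ) (τ : PTy) (Δ : List PTy) :
    cntEnv α (τ :: Δ) = cnt α τ + cntEnv α Δ := by simp [cntEnv]

lemma envholes_length_le (α : ℕ) : ∀ (Δ : List PTy) (δ : List Val),
    (envholes α Δ δ).length ≤ cntEnv α Δ := by
  intro Δ
  induction Δ with
  | nil => intro δ; simp [envholes, cntEnv]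
  | cons τ Δ ih =>
    intro δ
    cases δ with
    | nil => simp [envholes, cntEnv]
    | cons v δ =>
      rw [envholes_cons, cntEnv_cons]
      simpa using Nat.add_le_add (holes_length_le α τ v) (ih δ)

lemma holes_typed {σ : ℕ → PTy} (α : ℕ) : ∀ (τ : PTy) (v : Val), HasTy v (psubst σ τ) →
    ∀ h ∈ holes α τ v, HasTy h (σ α) := by
  intro τ
  induction τ with
  | unit => intro v _ h hh; simp [holes] at hh
  | var n =>
    intro v hv h hh
    by_cases hn : n = α
    · simp [holes, hn] at hh
      subst hh; subst hn; exact hv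
    · simp [holes, hn] at hh
  | sum a b iha ihb =>
    intro v hv h hh
    cases hv with
    | vleft ht => exact iha _ ht h (by simpa [holes] using hh)
    | vright ht => exact ihb _ ht h (by simpa [holes] using hh)
  | prod a b iha ihb =>
    intro v hv h hh
    cases hv with
    | vpair ht1 ht2 =>
      rcases List.mem_append.mp (by simpa [holes] using hh) with h' | h'
      · exact iha _ ht1 h h'
      · exact ihb _ ht2 h h'

lemma envholes_typed {σ : ℕ → PTy} {Δ : List PTy} {δ : List Val} (hv : EnvTy σ Δ δ) (α : ℕ) :
    ∀ h ∈ envholes α Δ δ, HasTy h (σ α) := by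
  induction hv with
  | nil => simp [envholes]
  | @cons τ v Δ δ hx _ ih =>
    intro h hh
    rcases List.mem_append.mp (by simpa [envholes_cons] using hh) with h' | h'
    · exact holes_typed α τ v hx h h'
    · exact ih h h'
lemma zipWith_get?' {A B C : Type*} (f : A → B → C) : ∀ (l₁ : List A) (l₂ : List B) (n : ℕ)
    (a : A) (b : B), l₁[n]? = some a → l₂[n]? = some b →
    (List.zipWith f l₁ l₂)[n]? = some (f a b) := by
  intro l₁
  induction l₁ with
  | nil => simp
  | cons x l₁ ih =>
    intro l₂ n a b h1 h2
    cases l₂ with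
    | nil => simp at h2
    | cons y l₂ =>
      cases n with
      | zero =>
        simp only [List.getElem?_cons_zero, Option.some.injEq] at h1 h2
        subst h1; subst h2; simp
      | succ n => simpa using ih l₂ n a b (by simpa using h1) (by simpa using h2)

lemma flatten_getElem? : ∀ (L : List (List Val)) (n : ℕ) (l : List Val), L[n]? = some l →
    ∀ k, k < l.length → L.flatten[(((L.take n).map List.length).sum + k)]? = l[k]? := by
  intro L
  induction L with
  | nil => simp
  | cons x L ih =>
    intro n l h k hk
    cases n with
    | zero =>
      simp only [List.getElem?_cons_zero, Option.some.injEq] at h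
      subst h
      simp [List.getElem?_append, hk]
    | succ n =>
      have h' := ih n l (by simpa using h) k hk
      simp only [List.take_succ_cons, List.map_cons, List.sum_cons, List.flatten_cons]
      rw [List.getElem?_append_right (by omega)]
      have he : x.length + ((L.take n).map List.length).sum + k - x.length
            = ((L.take n).map List.length).sum + k := by omega
      rw [he]
      exact h'

lemma block_idx_lt (L : List (List Val)) (n : ℕ) (l : List Val) (h : L[n]? = some l)
    (k : ℕ) (hk : k < l.length) :
    ((L.take n).map List.length).sum + k < L.flatten.length := by
  have hf := flatten_getElem? L n l h k hk
  obtain ⟨h', -⟩ := List.getElem?_eq_some_iff.mp (hf.trans (List.getElem?_eq_getElem hk))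
  exact h'

lemma block_eq_map_range' (L : List (List Val)) (n : ℕ) (l : List Val) (h : L[n]? = some l) :
    l = (List.range' (((L.take n).map List.length).sum) l.length).map
        (fun i => L.flatten.getD i .sole) := by
  apply List.ext_getElem (by simp)
  intro k hk hk'
  have hf := flatten_getElem? L n l h k hk
  simp only [List.getElem_map, List.getElem_range']
  rw [List.getD_eq_getElem?_getD]
  have he : ((L.take n).map List.length).sum + 1 * k = ((L.take n).map List.length).sum + k := by
    omega
  rw [he, hf]
  simp [List.getElem?_eq_getElem hk]

lemma blocklens_eq (α : ℕ) : ∀ (Δ : List PTy) (δ δ' : List Val),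
    envshell Δ δ = envshell Δ δ' →
    (List.zipWith (holes α) Δ δ).map List.length
      = (List.zipWith (holes α) Δ δ').map List.length := by
  intro Δ
  induction Δ with
  | nil => simp
  | cons τ Δ ih =>
    intro δ δ' h
    cases δ with
    | nil =>
      cases δ' with
      | nil => rfl
      | cons w δ' => exact absurd h (by simp [envshell])
    | cons v δ =>
      cases δ' with
      | nil => exact absurd h (by simp [envshell])
      | cons w δ' =>
        rw [envshell_cons, envshell_cons] at h
        simp only [List.cons.injEq] at h
        simp only [List.zipWith_cons_cons, List.map_cons]
        rw [holes_length_of_shell_eq α τ v w h.1, ih δ δ' h.2]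

lemma envholes_length_eq (α : ℕ) (Δ : List PTy) (δ δ' : List Val)
    (h : envshell Δ δ = envshell Δ δ') :
    (envholes α Δ δ).length = (envholes α Δ δ').length := by
  unfold envholes
  rw [List.length_flatten, List.length_flatten, blocklens_eq α Δ δ δ' h]

lemma mem_enum : ∀ (τ : PTy) (v : Val), v ∈ enum τ ↔ HasTy v τ := by
  intro τ
  induction τ with
  | unit =>
    intro v
    constructor
    · intro h; simp [enum] at h; subst h; exact .sole
    · intro h; cases h; simp [enum]
  | var n =>
    intro v
    constructor
    · intro h; simp [enum] at h
    · intro h; cases h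
  | sum a b iha ihb =>
    intro v
    constructor
    · intro h
      simp only [enum] at h
      rcases List.mem_append.mp h with h' | h'
      · obtain ⟨w, hw, rfl⟩ := List.mem_map.mp h'
        exact .vleft ((iha w).mp hw)
      · obtain ⟨w, hw, rfl⟩ := List.mem_map.mp h'
        exact .vright ((ihb w).mp hw)
    · intro h
      cases h with
      | vleft h => exact List.mem_append.mpr (Or.inl (List.mem_map.mpr ⟨_, (iha _).mpr h, rfl⟩))
      | vright h => exact List.mem_append.mpr (Or.inr (List.mem_map.mpr ⟨_, (ihb _).mpr h, rfl⟩))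
  | prod a b iha ihb =>
    intro v
    constructor
    · intro h
      simp only [enum] at h
      obtain ⟨x, hx, h'⟩ := List.mem_flatMap.mp h
      obtain ⟨y, hy, rfl⟩ := List.mem_map.mp h'
      exact .vpair ((iha x).mp hx) ((ihb y).mp hy)
    · intro h
      cases h with
      | vpair h1 h2 =>
        exact List.mem_flatMap.mpr ⟨_, (iha _).mpr h1,
          List.mem_map.mpr ⟨_, (ihb _).mpr h2, rfl⟩⟩

lemma enum_nodup : ∀ τ : PTy, (enum τ).Nodup := by
  intro τ
  induction τ with
  | unit => simp [enum]
  | var n => simp [enum]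
  | sum a b iha ihb =>
    refine List.Nodup.append (iha.map (fun x y h => Val.vleft.inj h))
      (ihb.map (fun x y h => Val.vright.inj h)) ?_
    intro v hv hv'
    obtain ⟨x, _, rfl⟩ := List.mem_map.mp hv
    obtain ⟨y, _, h⟩ := List.mem_map.mp hv'
    exact Val.noConfusion h
  | prod a b iha ihb =>
    rw [show enum (.prod a b) = (enum a).flatMap (fun v => (enum b).map (.vpair v)) from rfl]
    rw [List.nodup_flatMap]
    constructor
    · intro x _
      exact ihb.map (fun y z h => (Val.vpair.inj h).2)
    · refine iha.pairwise_of_forall_ne ?_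
      intro x _ y _ hxy v hv hv'
      obtain ⟨c, _, rfl⟩ := List.mem_map.mp hv
      obtain ⟨d, _, h⟩ := List.mem_map.mp hv'
      exact hxy (Val.vpair.inj h).1.symm

lemma card_hasTy_le (τ : PTy) : Nat.card {v : Val // HasTy v τ} ≤ (enum τ).length := by
  have h1 : Nat.card {v : Val // HasTy v τ} = Set.ncard {v : Val | HasTy v τ} :=
    Nat.card_coe_set_eq _
  have h2 : {v : Val | HasTy v τ} = ((enum τ).toFinset : Set Val) := by
    ext v; simp [mem_enum]
  rw [h1, h2, Set.ncard_coe_finset]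
  exact List.toFinset_card_le _
lemma holes_denT_idx {Δ : List PTy} {δ δ' : List Val} {σ σ' : ℕ → PTy}
    (hv : EnvTy σ Δ δ) (hv' : EnvTy σ' Δ δ')
    (hsh : envshell Δ δ = envshell Δ δ') :
    ∀ {t : Term} {τ : PTy}, TmTy Δ t τ → ∀ α : ℕ, ∃ I : List ℕ,
      (∀ i ∈ I, i < (envholes α Δ δ).length) ∧
      holes α τ (denT t δ) = I.map (fun i => (envholes α Δ δ).getD i .sole) ∧
      holes α τ (denT t δ') = I.map (fun i => (envholes α Δ δ').getD i .sole) := by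
  intro t τ ht
  induction ht with
  | sole => intro α; exact ⟨[], by simp, by simp [denT, holes], by simp [denT, holes]⟩
  | tleft _ ih =>
    intro α
    obtain ⟨I, hb, e₁, e₂⟩ := ih α
    exact ⟨I, hb, by simpa [denT, holes] using e₁, by simpa [denT, holes] using e₂⟩
  | tright _ ih =>
    intro α
    obtain ⟨I, hb, e₁, e₂⟩ := ih α
    exact ⟨I, hb, by simpa [denT, holes] using e₁, by simpa [denT, holes] using e₂⟩
  | tpair _ _ ih1 ih2 =>
    intro α
    obtain ⟨I₁, hb₁, e₁, e₁'⟩ := ih1 α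
    obtain ⟨I₂, hb₂, e₂, e₂'⟩ := ih2 α
    refine ⟨I₁ ++ I₂, ?_, ?_, ?_⟩
    · intro i hi
      rcases List.mem_append.mp hi with h' | h'
      exacts [hb₁ i h', hb₂ i h']
    · simp [denT, holes, e₁, e₂]
    · simp [denT, holes, e₁', e₂']
  | @var n τ h =>
    intro α
    have hn : n < Δ.length := by
      by_contra hc
      rw [List.getElem?_eq_none (by omega)] at h
      simp at h
    have hl := envty_length hv
    have hl' := envty_length hv'
    have hδ : n < δ.length := by omega
    have hδ' : n < δ'.length := by omega
    set Z := List.zipWith (holes α) Δ δ with hZ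
    set Z' := List.zipWith (holes α) Δ δ' with hZ'
    have hz : Z[n]? = some (holes α τ (δ[n])) :=
      zipWith_get?' (holes α) Δ δ n τ _ h (List.getElem?_eq_getElem hδ)
    have hz' : Z'[n]? = some (holes α τ (δ'[n])) :=
      zipWith_get?' (holes α) Δ δ' n τ _ h (List.getElem?_eq_getElem hδ')
    have hlens : Z.map List.length = Z'.map List.length := blocklens_eq α Δ δ δ' hsh
    have hoff : ((Z.take n).map List.length).sum = ((Z'.take n).map List.length).sum := by
      rw [List.map_take, List.map_take, hlens]
    have hshn : shell τ (δ[n]) = shell τ (δ'[n]) := by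
      have e1 := envshell_get Δ δ n τ _ h (List.getElem?_eq_getElem hδ)
      have e2 := envshell_get Δ δ' n τ _ h (List.getElem?_eq_getElem hδ')
      rw [hsh, e2] at e1
      exact (Option.some_inj.mp e1).symm
    have hblen : (holes α τ (δ[n])).length = (holes α τ (δ'[n])).length :=
      holes_length_of_shell_eq α τ _ _ hshn
    have hd : denT (.var n) δ = δ[n] := by
      simp [denT, List.getD_eq_getElem?_getD, List.getElem?_eq_getElem hδ]
    have hd' : denT (.var n) δ' = δ'[n] := by
      simp [denT, List.getD_eq_getElem?_getD, List.getElem?_eq_getElem hδ']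
    refine ⟨List.range' (((Z.take n).map List.length).sum) ((holes α τ (δ[n])).length), ?_, ?_, ?_⟩
    · intro i hi
      rw [List.mem_range'_1] at hi
      have := block_idx_lt Z n _ hz (i - ((Z.take n).map List.length).sum) (by omega)
      have he : ((Z.take n).map List.length).sum + (i - ((Z.take n).map List.length).sum) = i := by
        omega
      rw [he] at this
      exact this
    · rw [hd]
      exact block_eq_map_range' Z n _ hz
    · rw [hd', hoff, hblen]
      exact block_eq_map_range' Z' n _ hz'

lemma eq_iff_shell_holes {σ : ℕ → PTy} : ∀ (τ : PTy) (v w : Val),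
    HasTy v (psubst σ τ) → HasTy w (psubst σ τ) →
    (v = w ↔ shell τ v = shell τ w ∧ ∀ α, holes α τ v = holes α τ w) := by
  intro τ
  induction τ with
  | unit => intro v w hv hw; cases hv; cases hw; simp
  | var n =>
    intro v w hv hw
    constructor
    · intro h'; rw [h']; exact ⟨rfl, fun _ => rfl⟩
    · rintro ⟨-, hh⟩
      have := hh n
      simpa [holes] using this
  | sum a b iha ihb =>
    intro v w hv hw
    cases hv with
    | vleft hv1 =>
      cases hw with
      | vleft hw1 =>
        constructor
        · intro h'; rw [h']; exact ⟨rfl, fun _ => rfl⟩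
        · rintro ⟨hsh, hh⟩
          simp only [shell, Shell.sleft.injEq] at hsh
          have := (iha _ _ hv1 hw1).mpr ⟨hsh, fun α => by simpa [holes] using hh α⟩
          rw [this]
      | vright hw1 =>
        constructor
        · intro h'; exact absurd h' (by simp)
        · rintro ⟨hsh, -⟩; exact absurd hsh (by simp [shell])
    | vright hv1 =>
      cases hw with
      | vleft hw1 =>
        constructor
        · intro h'; exact absurd h' (by simp)
        · rintro ⟨hsh, -⟩; exact absurd hsh (by simp [shell])
      | vright hw1 =>
        constructor
        · intro h'; rw [h']; exact ⟨rfl, fun _ => rfl⟩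
        · rintro ⟨hsh, hh⟩
          simp only [shell, Shell.sright.injEq] at hsh
          have := (ihb _ _ hv1 hw1).mpr ⟨hsh, fun α => by simpa [holes] using hh α⟩
          rw [this]
  | prod a b iha ihb =>
    intro v w hv hw
    cases hv with
    | vpair hv1 hv2 =>
      cases hw with
      | vpair hw1 hw2 =>
        constructor
        · intro h'; rw [h']; exact ⟨rfl, fun _ => rfl⟩
        · rintro ⟨hsh, hh⟩
          simp only [shell, Shell.spair.injEq] at hsh
          have hcomp := fun α => List.append_inj
            (by simpa [holes] using hh α) (holes_length_of_shell_eq α a _ _ hsh.1)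
          have e1 := (iha _ _ hv1 hw1).mpr ⟨hsh.1, fun α => (hcomp α).1⟩
          have e2 := (ihb _ _ hv2 hw2).mpr ⟨hsh.2, fun α => (hcomp α).2⟩
          rw [e1, e2]

lemma map_eq_map_of_iff {f₁ g₁ f₂ g₂ : ℕ → Val} : ∀ (I J : List ℕ),
    I.map f₁ = J.map g₁ → (∀ i ∈ I, ∀ j ∈ J, (f₁ i = g₁ j ↔ f₂ i = g₂ j)) →
    I.map f₂ = J.map g₂ := by
  intro I
  induction I with
  | nil =>
    intro J h _
    cases J with
    | nil => rfl
    | cons j J => simp at h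
  | cons i I ih =>
    intro J h hp
    cases J with
    | nil => simp at h
    | cons j J =>
      simp only [List.map_cons, List.cons.injEq] at h ⊢
      exact ⟨(hp i (by simp) j (by simp)).mp h.1,
        ih J h.2 (fun i' hi' j' hj' => hp i' (by simp [hi']) j' (by simp [hj']))⟩

lemma denT_eq_mp {Δ : List PTy} {t₁ t₂ : Term} {τ : PTy} {σ₁ σ₂ : ℕ → PTy} {δ₁ δ₂ : List Val}
    (ht₁ : TmTy Δ t₁ τ) (ht₂ : TmTy Δ t₂ τ)
    (hv₁ : EnvTy σ₁ Δ δ₁) (hv₂ : EnvTy σ₂ Δ δ₂) (hp : EqPat Δ δ₁ δ₂)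
    (e : denT t₁ δ₁ = denT t₂ δ₁) : denT t₁ δ₂ = denT t₂ δ₂ := by
  have hl₁ := envty_length hv₁
  have hl₂ := envty_length hv₂
  have hsh := hp.1
  apply (eq_iff_shell_holes (σ := σ₂) τ _ _ (hasTy_denT hv₂ ht₁) (hasTy_denT hv₂ ht₂)).mpr
  constructor
  · calc shell τ (denT t₁ δ₂) = shell τ (denT t₁ δ₁) := (shell_denT hl₁ hl₂ hsh ht₁).symm
      _ = shell τ (denT t₂ δ₁) := by rw [e]
      _ = shell τ (denT t₂ δ₂) := shell_denT hl₁ hl₂ hsh ht₂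
  · intro α
    obtain ⟨I, hIb, eI₁, eI₂⟩ := holes_denT_idx hv₁ hv₂ hsh ht₁ α
    obtain ⟨J, hJb, eJ₁, eJ₂⟩ := holes_denT_idx hv₁ hv₂ hsh ht₂ α
    have hlen := envholes_length_eq α Δ δ₁ δ₂ hsh
    have h1 : I.map (fun i => (envholes α Δ δ₁).getD i .sole)
        = J.map (fun i => (envholes α Δ δ₁).getD i .sole) := by rw [← eI₁, ← eJ₁, e]
    rw [eI₂, eJ₂]
    apply map_eq_map_of_iff I J h1
    intro i hi j hj
    have hi₁ := hIb i hi
    have hj₁ := hJb j hj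
    have hi₂ : i < (envholes α Δ δ₂).length := hlen ▸ hi₁
    have hj₂ : j < (envholes α Δ δ₂).length := hlen ▸ hj₁
    have hiff := hp.2 α i j _ _ _ _ (List.getElem?_eq_getElem hi₁) (List.getElem?_eq_getElem hj₁)
      (List.getElem?_eq_getElem hi₂) (List.getElem?_eq_getElem hj₂)
    rw [List.getD_eq_getElem?_getD, List.getD_eq_getElem?_getD, List.getD_eq_getElem?_getD,
      List.getD_eq_getElem?_getD, List.getElem?_eq_getElem hi₁, List.getElem?_eq_getElem hj₁,
      List.getElem?_eq_getElem hi₂, List.getElem?_eq_getElem hj₂]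
    simpa using hiff

lemma denT_eq_iff {Δ : List PTy} {t₁ t₂ : Term} {τ : PTy} {σ₁ σ₂ : ℕ → PTy} {δ₁ δ₂ : List Val}
    (ht₁ : TmTy Δ t₁ τ) (ht₂ : TmTy Δ t₂ τ)
    (hv₁ : EnvTy σ₁ Δ δ₁) (hv₂ : EnvTy σ₂ Δ δ₂) (hp : EqPat Δ δ₁ δ₂) :
    (denT t₁ δ₁ = denT t₂ δ₁ ↔ denT t₁ δ₂ = denT t₂ δ₂) :=
  ⟨denT_eq_mp ht₁ ht₂ hv₁ hv₂ hp, denT_eq_mp ht₁ ht₂ hv₂ hv₁ (eqPat_symm hp)⟩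
/-- Replace hole values (at type-variable positions) using `f`. -/
def tmap (f : ℕ → Val → Val) : PTy → Val → Val
  | .var n, v => f n v
  | .unit, _ => .sole
  | .sum a _, .vleft v => .vleft (tmap f a v)
  | .sum _ b, .vright v => .vright (tmap f b v)
  | .prod a b, .vpair v w => .vpair (tmap f a v) (tmap f b w)
  | _, _ => .sole

lemma tmap_hasTy {f : ℕ → Val → Val} {σ σ' : ℕ → PTy} : ∀ (τ : PTy) (v : Val),
    HasTy v (psubst σ τ) → (∀ n h, h ∈ holes n τ v → HasTy (f n h) (σ' n)) →
    HasTy (tmap f τ v) (psubst σ' τ) := by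
  intro τ
  induction τ with
  | unit => intro v hv _; exact .sole
  | var n => intro v hv hf; exact hf n v (by simp [holes])
  | sum a b iha ihb =>
    intro v hv hf
    cases hv with
    | vleft h => exact .vleft (iha _ h (fun n x hx => hf n x (by simpa [holes] using hx)))
    | vright h => exact .vright (ihb _ h (fun n x hx => hf n x (by simpa [holes] using hx)))
  | prod a b iha ihb =>
    intro v hv hf
    cases hv with
    | vpair h1 h2 =>
      exact .vpair
        (iha _ h1 (fun n x hx => hf n x (by simp [holes]; exact Or.inl hx)))
        (ihb _ h2 (fun n x hx => hf n x (by simp [holes]; exact Or.inr hx)))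

lemma tmap_shell {f : ℕ → Val → Val} {σ : ℕ → PTy} : ∀ (τ : PTy) (v : Val),
    HasTy v (psubst σ τ) → shell τ (tmap f τ v) = shell τ v := by
  intro τ
  induction τ with
  | unit => intro v hv; cases hv; rfl
  | var n => intro v _; rfl
  | sum a b iha ihb =>
    intro v hv
    cases hv with
    | vleft h => simp [tmap, shell, iha _ h]
    | vright h => simp [tmap, shell, ihb _ h]
  | prod a b iha ihb =>
    intro v hv
    cases hv with
    | vpair h1 h2 => simp [tmap, shell, iha _ h1, ihb _ h2]

lemma tmap_holes {f : ℕ → Val → Val} {σ : ℕ → PTy} (α : ℕ) : ∀ (τ : PTy) (v : Val),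
    HasTy v (psubst σ τ) → holes α τ (tmap f τ v) = (holes α τ v).map (f α) := by
  intro τ
  induction τ with
  | unit => intro v hv; cases hv; rfl
  | var n =>
    intro v _
    by_cases h : n = α
    · subst h; simp [tmap, holes]
    · simp [tmap, holes, h]
  | sum a b iha ihb =>
    intro v hv
    cases hv with
    | vleft h => simp [tmap, holes, iha _ h]
    | vright h => simp [tmap, holes, ihb _ h]
  | prod a b iha ihb =>
    intro v hv
    cases hv with
    | vpair h1 h2 => simp [tmap, holes, iha _ h1, ihb _ h2]
lemma exists_patch (E O₁ O₂ N₁ : List Val)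
    (hnE : E.Nodup)
    (hO₂E : ∀ x ∈ O₂, x ∈ E)
    (hO₁₂ : O₁.length = O₂.length)
    (hpat : ∀ (i j : ℕ) (h₁ k₁ h₂ k₂ : Val), O₁[i]? = some h₁ → O₁[j]? = some k₁ →
        O₂[i]? = some h₂ → O₂[j]? = some k₂ → (h₁ = k₁ ↔ h₂ = k₂))
    (hcard : N₁.length + O₁.length ≤ E.length) :
    ∃ f : Val → Val,
      (∀ (i : ℕ) (h₁ h₂ : Val), O₁[i]? = some h₁ → O₂[i]? = some h₂ → f h₁ = h₂) ∧
      (∀ x ∈ N₁ ++ O₁, ∀ y ∈ N₁ ++ O₁, f x = f y → x = y) ∧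
      (∀ x ∈ N₁, f x ∈ E) := by
  classical
  set M : List Val := (N₁.filter (fun x => decide (x ∉ O₁))).dedup with hM
  set EF : List Val := E.filter (fun x => decide (x ∉ O₂)) with hEF
  have hMnd : M.Nodup := List.nodup_dedup _
  have hEFnd : EF.Nodup := hnE.filter _
  have hmemM : ∀ x, x ∈ M ↔ x ∈ N₁ ∧ x ∉ O₁ := by
    intro x; rw [hM, List.mem_dedup, List.mem_filter]; simp
  have hmemEF : ∀ x, x ∈ EF ↔ x ∈ E ∧ x ∉ O₂ := by
    intro x; rw [hEF, List.mem_filter]; simp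
  -- cardinalities
  have hD : O₁.toFinset.card = O₂.toFinset.card := by
    apply Finset.card_bij (fun v _ => O₂.getD (O₁.idxOf v) .sole)
    · intro v hv
      have hv' : v ∈ O₁ := List.mem_toFinset.mp hv
      have hlt : O₁.idxOf v < O₁.length := List.idxOf_lt_length_iff.mpr hv'
      have : O₂.getD (O₁.idxOf v) .sole = O₂[O₁.idxOf v]'(by omega) := by
        rw [List.getD_eq_getElem?_getD, List.getElem?_eq_getElem (by omega)]; rfl
      rw [this]
      exact List.mem_toFinset.mpr (List.getElem_mem _)
    · intro x hx y hy he
      have hx' : x ∈ O₁ := List.mem_toFinset.mp hx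
      have hy' : y ∈ O₁ := List.mem_toFinset.mp hy
      have hltx : O₁.idxOf x < O₁.length := List.idxOf_lt_length_iff.mpr hx'
      have hlty : O₁.idxOf y < O₁.length := List.idxOf_lt_length_iff.mpr hy'
      have ex : O₂.getD (O₁.idxOf x) .sole = O₂[O₁.idxOf x]'(by omega) := by
        rw [List.getD_eq_getElem?_getD, List.getElem?_eq_getElem (by omega)]; rfl
      have ey : O₂.getD (O₁.idxOf y) .sole = O₂[O₁.idxOf y]'(by omega) := by
        rw [List.getD_eq_getElem?_getD, List.getElem?_eq_getElem (by omega)]; rfl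
      rw [ex, ey] at he
      have := (hpat (O₁.idxOf x) (O₁.idxOf y) x y _ _
        (by rw [List.getElem?_eq_getElem hltx, List.getElem_idxOf])
        (by rw [List.getElem?_eq_getElem hlty, List.getElem_idxOf])
        (List.getElem?_eq_getElem (by omega))
        (List.getElem?_eq_getElem (by omega))).mpr he
      exact this
    · intro u hu
      have hu' : u ∈ O₂ := List.mem_toFinset.mp hu
      have hlt : O₂.idxOf u < O₂.length := List.idxOf_lt_length_iff.mpr hu'
      set k := O₂.idxOf u with hk
      have hkO₁ : k < O₁.length := by omega
      refine ⟨O₁[k], List.mem_toFinset.mpr (List.getElem_mem _), ?_⟩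
      have hlt2 : O₁.idxOf (O₁[k]) < O₁.length :=
        List.idxOf_lt_length_iff.mpr (List.getElem_mem _)
      have h11 : O₁[O₁.idxOf (O₁[k])]'hlt2 = O₁[k] := List.getElem_idxOf _
      have h22 : O₂[O₁.idxOf (O₁[k])]'(by omega) = O₂[k]'hlt :=
        (hpat (O₁.idxOf (O₁[k])) k (O₁[k]) (O₁[k]) _ _
          (by rw [List.getElem?_eq_getElem hlt2, h11])
          (List.getElem?_eq_getElem hkO₁)
          (List.getElem?_eq_getElem (by omega))
          (List.getElem?_eq_getElem hlt)).mp rfl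
      rw [List.getD_eq_getElem?_getD, List.getElem?_eq_getElem (by omega : O₁.idxOf (O₁[k]) < O₂.length)]
      show O₂[O₁.idxOf (O₁[k])]'_ = u
      rw [h22]
      exact List.getElem_idxOf (x := u) hlt
  have hMEF : M.length ≤ EF.length := by
    have h1 : M.toFinset.card = M.length := List.toFinset_card_of_nodup hMnd
    have h2 : EF.toFinset.card = EF.length := List.toFinset_card_of_nodup hEFnd
    have hsub : O₂.toFinset ⊆ E.toFinset := by
      intro x hx; exact List.mem_toFinset.mpr (hO₂E x (List.mem_toFinset.mp hx))
    have hEFt : EF.toFinset = E.toFinset \ O₂.toFinset := by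
      ext x
      simp only [Finset.mem_sdiff, List.mem_toFinset, hmemEF]
    have hMt : M.toFinset = N₁.toFinset \ O₁.toFinset := by
      ext x
      simp only [Finset.mem_sdiff, List.mem_toFinset, hmemM]
    have hNO : (N₁.toFinset ∪ O₁.toFinset).card ≤ E.toFinset.card := by
      rw [List.toFinset_card_of_nodup hnE]
      calc (N₁.toFinset ∪ O₁.toFinset).card ≤ N₁.toFinset.card + O₁.toFinset.card :=
            Finset.card_union_le _ _
        _ ≤ N₁.length + O₁.length :=
            Nat.add_le_add (List.toFinset_card_le _) (List.toFinset_card_le _)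
        _ ≤ E.length := hcard
    have hMcard : M.toFinset.card + O₁.toFinset.card ≤ E.toFinset.card := by
      rw [hMt]
      calc (N₁.toFinset \ O₁.toFinset).card + O₁.toFinset.card
          = (N₁.toFinset ∪ O₁.toFinset).card := by
            rw [← Finset.card_union_of_disjoint (Finset.sdiff_disjoint)]
            congr 1
            rw [Finset.sdiff_union_self_eq_union]
        _ ≤ E.toFinset.card := hNO
    have hEFcard : EF.toFinset.card = E.toFinset.card - O₂.toFinset.card := by
      rw [hEFt, Finset.card_sdiff_of_subset hsub]
    omega
  -- define f
  refine ⟨fun x => if x ∈ O₁ then O₂.getD (O₁.idxOf x) .sole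
    else EF.getD (M.idxOf x) .sole, ?_, ?_, ?_⟩
  · intro i h₁ h₂ e1 e2
    beta_reduce
    obtain ⟨hi, rfl⟩ := List.getElem?_eq_some_iff.mp e1
    have hmem : O₁[i] ∈ O₁ := List.getElem_mem _
    rw [if_pos hmem]
    have hlt : O₁.idxOf (O₁[i]) < O₁.length := List.idxOf_lt_length_iff.mpr hmem
    rw [List.getD_eq_getElem?_getD, List.getElem?_eq_getElem (by omega : O₁.idxOf (O₁[i]) < O₂.length)]
    show O₂[O₁.idxOf (O₁[i])]'_ = h₂
    obtain ⟨hi₂, rfl⟩ := List.getElem?_eq_some_iff.mp e2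
    exact (hpat (O₁.idxOf (O₁[i])) i (O₁[i]) (O₁[i]) _ _
      (by rw [List.getElem?_eq_getElem hlt, List.getElem_idxOf])
      (List.getElem?_eq_getElem hi)
      (List.getElem?_eq_getElem (by omega))
      (List.getElem?_eq_getElem hi₂)).mp rfl
  · intro x hx y hy he
    beta_reduce at he
    have hxM : x ∉ O₁ → x ∈ M := by
      intro h
      rcases List.mem_append.mp hx with h' | h'
      · exact (hmemM x).mpr ⟨h', h⟩
      · exact absurd h' h
    have hyM : y ∉ O₁ → y ∈ M := by
      intro h
      rcases List.mem_append.mp hy with h' | h'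
      · exact (hmemM y).mpr ⟨h', h⟩
      · exact absurd h' h
    by_cases hx1 : x ∈ O₁ <;> by_cases hy1 : y ∈ O₁
    · -- both old
      rw [if_pos hx1, if_pos hy1] at he
      have hltx : O₁.idxOf x < O₁.length := List.idxOf_lt_length_iff.mpr hx1
      have hlty : O₁.idxOf y < O₁.length := List.idxOf_lt_length_iff.mpr hy1
      have ex : O₂.getD (O₁.idxOf x) .sole = O₂[O₁.idxOf x]'(by omega) := by
        rw [List.getD_eq_getElem?_getD, List.getElem?_eq_getElem (by omega)]; rfl
      have ey : O₂.getD (O₁.idxOf y) .sole = O₂[O₁.idxOf y]'(by omega) := by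
        rw [List.getD_eq_getElem?_getD, List.getElem?_eq_getElem (by omega)]; rfl
      rw [ex, ey] at he
      exact (hpat (O₁.idxOf x) (O₁.idxOf y) x y _ _
        (by rw [List.getElem?_eq_getElem hltx, List.getElem_idxOf])
        (by rw [List.getElem?_eq_getElem hlty, List.getElem_idxOf])
        (List.getElem?_eq_getElem (by omega))
        (List.getElem?_eq_getElem (by omega))).mpr he
    · -- x old, y new
      exfalso
      have hyM' := hyM hy1
      have hlty : M.idxOf y < M.length := List.idxOf_lt_length_iff.mpr hyM'
      have hltyEF : M.idxOf y < EF.length := by omega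
      rw [if_pos hx1, if_neg hy1] at he
      have ey : EF.getD (M.idxOf y) .sole = EF[M.idxOf y]'hltyEF := by
        rw [List.getD_eq_getElem?_getD, List.getElem?_eq_getElem hltyEF]; rfl
      have hxlt : O₁.idxOf x < O₁.length := List.idxOf_lt_length_iff.mpr hx1
      have ex : O₂.getD (O₁.idxOf x) .sole = O₂[O₁.idxOf x]'(by omega) := by
        rw [List.getD_eq_getElem?_getD, List.getElem?_eq_getElem (by omega)]; rfl
      rw [ex, ey] at he
      have hmem2 : EF[M.idxOf y]'hltyEF ∈ EF := List.getElem_mem _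
      have : EF[M.idxOf y]'hltyEF ∉ O₂ := ((hmemEF _).mp hmem2).2
      exact this (he ▸ List.getElem_mem _)
    · -- x new, y old
      exfalso
      have hxM' := hxM hx1
      have hltx : M.idxOf x < M.length := List.idxOf_lt_length_iff.mpr hxM'
      have hltxEF : M.idxOf x < EF.length := by omega
      rw [if_neg hx1, if_pos hy1] at he
      have ex : EF.getD (M.idxOf x) .sole = EF[M.idxOf x]'hltxEF := by
        rw [List.getD_eq_getElem?_getD, List.getElem?_eq_getElem hltxEF]; rfl
      have hylt : O₁.idxOf y < O₁.length := List.idxOf_lt_length_iff.mpr hy1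
      have ey : O₂.getD (O₁.idxOf y) .sole = O₂[O₁.idxOf y]'(by omega) := by
        rw [List.getD_eq_getElem?_getD, List.getElem?_eq_getElem (by omega)]; rfl
      rw [ex, ey] at he
      have hmem2 : EF[M.idxOf x]'hltxEF ∈ EF := List.getElem_mem _
      have : EF[M.idxOf x]'hltxEF ∉ O₂ := ((hmemEF _).mp hmem2).2
      exact this (he.symm ▸ List.getElem_mem _)
    · -- both new
      have hxM' := hxM hx1
      have hyM' := hyM hy1
      have hltx : M.idxOf x < M.length := List.idxOf_lt_length_iff.mpr hxM'
      have hlty : M.idxOf y < M.length := List.idxOf_lt_length_iff.mpr hyM'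
      rw [if_neg hx1, if_neg hy1] at he
      have ex : EF.getD (M.idxOf x) .sole = EF[M.idxOf x]'(by omega) := by
        rw [List.getD_eq_getElem?_getD, List.getElem?_eq_getElem (by omega)]; rfl
      have ey : EF.getD (M.idxOf y) .sole = EF[M.idxOf y]'(by omega) := by
        rw [List.getD_eq_getElem?_getD, List.getElem?_eq_getElem (by omega)]; rfl
      rw [ex, ey] at he
      have hidx : M.idxOf x = M.idxOf y := (hEFnd.getElem_inj_iff).mp he
      have e1 : M[M.idxOf x]'hltx = x := List.getElem_idxOf _
      have e2 : M[M.idxOf y]'hlty = y := List.getElem_idxOf _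
      rw [← e1, ← e2]
      congr 1
  · intro x hx
    beta_reduce
    by_cases hx1 : x ∈ O₁
    · simp only [if_pos hx1]
      have hlt : O₁.idxOf x < O₁.length := List.idxOf_lt_length_iff.mpr hx1
      have ex : O₂.getD (O₁.idxOf x) .sole = O₂[O₁.idxOf x]'(by omega) := by
        rw [List.getD_eq_getElem?_getD, List.getElem?_eq_getElem (by omega)]; rfl
      rw [ex]
      exact hO₂E _ (List.getElem_mem _)
    · simp only [if_neg hx1]
      have hxM : x ∈ M := (hmemM x).mpr ⟨hx, hx1⟩
      have hlt : M.idxOf x < M.length := List.idxOf_lt_length_iff.mpr hxM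
      have ex : EF.getD (M.idxOf x) .sole = EF[M.idxOf x]'(by omega) := by
        rw [List.getD_eq_getElem?_getD, List.getElem?_eq_getElem (by omega)]; rfl
      rw [ex]
      exact ((hmemEF _).mp (List.getElem_mem _)).1
lemma append_lookup {A B : List Val} {i : ℕ} {x : Val} (h : (A ++ B)[i]? = some x) :
    (i < A.length ∧ A[i]? = some x) ∨ (A.length ≤ i ∧ B[i - A.length]? = some x) := by
  by_cases hi : i < A.length
  · exact Or.inl ⟨hi, (List.getElem?_append_left hi).symm.trans h⟩
  · exact Or.inr ⟨by omega, (List.getElem?_append_right (by omega)).symm.trans h⟩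

lemma transport {Δ : List PTy} {δ₁ δ₂ : List Val} {σ₁ σ₂ : ℕ → PTy} (τ : PTy)
    (hv₁ : EnvTy σ₁ Δ δ₁) (hv₂ : EnvTy σ₂ Δ δ₂) (hp : EqPat Δ δ₁ δ₂)
    (hsz : ∀ α, cntEnv α (τ :: Δ) ≤ (enum (σ₂ α)).length)
    (v₁ : Val) (hty : HasTy v₁ (psubst σ₁ τ)) :
    ∃ v₂, HasTy v₂ (psubst σ₂ τ) ∧ EqPat (τ :: Δ) (v₁ :: δ₁) (v₂ :: δ₂) := by
  have hsh := hp.1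
  have key : ∀ α : ℕ, ∃ f : Val → Val,
      (∀ (i : ℕ) (h₁ h₂ : Val), (envholes α Δ δ₁)[i]? = some h₁ →
        (envholes α Δ δ₂)[i]? = some h₂ → f h₁ = h₂) ∧
      (∀ x ∈ holes α τ v₁ ++ envholes α Δ δ₁, ∀ y ∈ holes α τ v₁ ++ envholes α Δ δ₁,
        f x = f y → x = y) ∧
      (∀ x ∈ holes α τ v₁, f x ∈ enum (σ₂ α)) := by
    intro α
    apply exists_patch
    · exact enum_nodup _
    · exact fun x hx => (mem_enum _ _).mpr (envholes_typed hv₂ α x hx)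
    · exact envholes_length_eq α Δ δ₁ δ₂ hsh
    · exact hp.2 α
    · calc (holes α τ v₁).length + (envholes α Δ δ₁).length
          ≤ cnt α τ + cntEnv α Δ :=
            Nat.add_le_add (holes_length_le α τ v₁) (envholes_length_le α Δ δ₁)
        _ = cntEnv α (τ :: Δ) := (cntEnv_cons α τ Δ).symm
        _ ≤ (enum (σ₂ α)).length := hsz α
  choose F hF1 hF2 hF3 using key
  refine ⟨tmap F τ v₁, ?_, ?_, ?_⟩
  · exact tmap_hasTy τ v₁ hty (fun n h hh => (mem_enum _ _).mp (hF3 n h hh))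
  · rw [envshell_cons, envshell_cons, tmap_shell τ v₁ hty, hsh]
  · intro α i j h₁ k₁ h₂ k₂ e1 e2 e3 e4
    rw [envholes_cons] at e1 e2
    rw [envholes_cons, tmap_holes α τ v₁ hty] at e3 e4
    set N := holes α τ v₁ with hN
    set O₁ := envholes α Δ δ₁ with hO₁
    set O₂ := envholes α Δ δ₂ with hO₂
    have desc : ∀ (i : ℕ) (h₁ h₂ : Val), (N ++ O₁)[i]? = some h₁ →
        (N.map (F α) ++ O₂)[i]? = some h₂ →
        (h₁ ∈ N ∧ h₂ = F α h₁) ∨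
        (N.length ≤ i ∧ O₁[i - N.length]? = some h₁ ∧ O₂[i - N.length]? = some h₂) := by
      intro i h₁ h₂ e1 e3
      rcases append_lookup e1 with ⟨hi1, e1'⟩ | ⟨hi1, e1'⟩
      · rcases append_lookup e3 with ⟨hi2, e3'⟩ | ⟨hi2, e3'⟩
        · left
          obtain ⟨hlt, rfl⟩ := List.getElem?_eq_some_iff.mp e1'
          refine ⟨List.getElem_mem _, ?_⟩
          obtain ⟨hlt2, h'⟩ := List.getElem?_eq_some_iff.mp e3'
          rw [← h', List.getElem_map]
        · rw [List.length_map] at hi2; omega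
      · rcases append_lookup e3 with ⟨hi2, e3'⟩ | ⟨hi2, e3'⟩
        · rw [List.length_map] at hi2; omega
        · right
          rw [List.length_map] at e3'
          exact ⟨hi1, e1', e3'⟩
    have hmemN : ∀ x ∈ N, x ∈ N ++ O₁ := fun x hx => List.mem_append.mpr (Or.inl hx)
    have hmemO : ∀ {i : ℕ} {x : Val}, O₁[i]? = some x → x ∈ N ++ O₁ := by
      intro i x hx
      obtain ⟨hlt, rfl⟩ := List.getElem?_eq_some_iff.mp hx
      exact List.mem_append.mpr (Or.inr (List.getElem_mem _))
    rcases desc i h₁ h₂ e1 e3 with ⟨hm1, rfl⟩ | ⟨hi, f1, f2⟩ <;>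
      rcases desc j k₁ k₂ e2 e4 with ⟨hm2, rfl⟩ | ⟨hj, g1, g2⟩
    · constructor
      · intro h'; rw [h']
      · intro h'; exact hF2 α h₁ (hmemN _ hm1) k₁ (hmemN _ hm2) h'
    · have hk : F α k₁ = k₂ := hF1 α (j - N.length) k₁ k₂ g1 g2
      constructor
      · intro h'; rw [← hk, h']
      · intro h'
        rw [← hk] at h'
        exact hF2 α h₁ (hmemN _ hm1) k₁ (hmemO g1) h'
    · have hk : F α h₁ = h₂ := hF1 α (i - N.length) h₁ h₂ f1 f2
      constructor
      · intro h'; rw [← hk, h']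
      · intro h'
        rw [← hk] at h'
        exact (hF2 α k₁ (hmemN _ hm2) h₁ (hmemO f1) h'.symm).symm
    · exact hp.2 α (i - N.length) (j - N.length) h₁ k₁ h₂ k₂ f1 g1 f2 g2
lemma sum_absorb {K : Type*} [AddCommMonoid K] (hid : ∀ a : K, a + a = a) {A : Type*}
    {l : List A} {F : A → K} {w : A} (hw : w ∈ l) : F w + (l.map F).sum = (l.map F).sum := by
  induction l with
  | nil => cases hw
  | cons x l ih =>
    rcases List.mem_cons.mp hw with rfl | hw'
    · simp only [List.map_cons, List.sum_cons, ← add_assoc, hid]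
    · simp only [List.map_cons, List.sum_cons]
      rw [← add_assoc, add_comm (F w) (F x), add_assoc, ih hw']

lemma sum_add_absorb {K : Type*} [AddCommMonoid K] (hid : ∀ a : K, a + a = a)
    {A B : Type*} (l₁ : List A) (l₂ : List B) (F₁ : A → K) (F₂ : B → K)
    (h : ∀ v ∈ l₁, ∃ w ∈ l₂, F₁ v = F₂ w) :
    (l₁.map F₁).sum + (l₂.map F₂).sum = (l₂.map F₂).sum := by
  induction l₁ with
  | nil => simp
  | cons x l ih =>
    simp only [List.map_cons, List.sum_cons, add_assoc]
    rw [ih (fun v hv => h v (List.mem_cons_of_mem _ hv))]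
    obtain ⟨w, hw, he⟩ := h x (by simp)
    rw [he]
    exact sum_absorb hid hw

lemma sum_eq_sum_of_rel {K : Type*} [AddCommMonoid K] (hid : ∀ a : K, a + a = a)
    {A B : Type*} (l₁ : List A) (l₂ : List B) (F₁ : A → K) (F₂ : B → K) (R : A → B → Prop)
    (hR : ∀ v ∈ l₁, ∀ w ∈ l₂, R v w → F₁ v = F₂ w)
    (h₁ : ∀ v ∈ l₁, ∃ w ∈ l₂, R v w)
    (h₂ : ∀ w ∈ l₂, ∃ v ∈ l₁, R v w) :
    (l₁.map F₁).sum = (l₂.map F₂).sum := by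
  have e1 : (l₁.map F₁).sum + (l₂.map F₂).sum = (l₂.map F₂).sum :=
    sum_add_absorb hid l₁ l₂ F₁ F₂ (fun v hv => by
      obtain ⟨w, hw, hr⟩ := h₁ v hv
      exact ⟨w, hw, hR v hv w hw hr⟩)
  have e2 : (l₂.map F₂).sum + (l₁.map F₁).sum = (l₁.map F₁).sum :=
    sum_add_absorb hid l₂ l₁ F₂ F₁ (fun w hw => by
      obtain ⟨v, hv, hr⟩ := h₂ w hw
      exact ⟨v, hv, (hR v hv w hw hr).symm⟩)
  calc (l₁.map F₁).sum = (l₂.map F₂).sum + (l₁.map F₁).sum := e2.symm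
    _ = (l₁.map F₁).sum + (l₂.map F₂).sum := add_comm _ _
    _ = (l₂.map F₂).sum := e1

lemma cntEnv_le_cntG {K : Type*} (α : ℕ) : ∀ (g : Goal2 K) (Δ : List PTy),
    cntEnv α Δ ≤ cntG α g Δ := by
  intro g
  induction g with
  | conj g₁ g₂ ih₁ ih₂ => intro Δ; exact le_trans (ih₁ Δ) (le_max_left _ _)
  | disj g₁ g₂ ih₁ ih₂ => intro Δ; exact le_trans (ih₁ Δ) (le_max_left _ _)
  | fresh τ g ih =>
    intro Δ
    calc cntEnv α Δ ≤ cntEnv α (τ :: Δ) := by rw [cntEnv_cons]; omega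
      _ ≤ cntG α g (τ :: Δ) := ih _
  | eq t₁ t₂ => intro Δ; exact le_refl _
  | neq t₁ t₂ => intro Δ; exact le_refl _
  | call R ts => intro Δ; exact le_refl _
  | factor r => intro Δ; exact le_refl _


/-- Weight preservation under equality patterns: if δ₁ ⇌_Δ δ₂, addition is
idempotent, all relations in γ are large-enough, and both substitutions are
large enough for g, then the weights of g under δ₁; σ₁ and δ₂; σ₂ agree. -/
theorem stmt_12 {K : Type*} [CommSemiring K] (hid : ∀ a : K, a + a = a)
    (γ : ℕ → List Val → K) (hγ : LargeEnough γ)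
    (Δ : List PTy) (g : Goal2 K) (hg : GoalTy Δ g)
    (σ₁ σ₂ : ℕ → PTy) (δ₁ δ₂ : List Val)
    (ht₁ : EnvTy σ₁ Δ δ₁) (ht₂ : EnvTy σ₂ Δ δ₂)
    (hp : EqPat Δ δ₁ δ₂)
    (hs₁ : ∀ α : ℕ, cntG α g Δ ≤ Nat.card {v : Val // HasTy v (σ₁ α)})
    (hs₂ : ∀ α : ℕ, cntG α g Δ ≤ Nat.card {v : Val // HasTy v (σ₂ α)}) :
    denG2 γ σ₁ g δ₁ = denG2 γ σ₂ g δ₂ := by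
  induction hg generalizing σ₁ σ₂ δ₁ δ₂ with
  | @conj Δ g₁ g₂ hg₁ hg₂ ih₁ ih₂ =>
    simp only [denG2]
    rw [ih₁ σ₁ σ₂ δ₁ δ₂ ht₁ ht₂ hp
        (fun α => le_trans (le_max_left _ _) (hs₁ α))
        (fun α => le_trans (le_max_left _ _) (hs₂ α)),
      ih₂ σ₁ σ₂ δ₁ δ₂ ht₁ ht₂ hp
        (fun α => le_trans (le_max_right _ _) (hs₁ α))
        (fun α => le_trans (le_max_right _ _) (hs₂ α))]
  | @disj Δ g₁ g₂ hg₁ hg₂ ih₁ ih₂ =>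
    simp only [denG2]
    rw [ih₁ σ₁ σ₂ δ₁ δ₂ ht₁ ht₂ hp
        (fun α => le_trans (le_max_left _ _) (hs₁ α))
        (fun α => le_trans (le_max_left _ _) (hs₂ α)),
      ih₂ σ₁ σ₂ δ₁ δ₂ ht₁ ht₂ hp
        (fun α => le_trans (le_max_right _ _) (hs₁ α))
        (fun α => le_trans (le_max_right _ _) (hs₂ α))]
  | @fresh Δ τ g hg ih =>
    simp only [denG2]
    have hsz₂ : ∀ α, cntEnv α (τ :: Δ) ≤ (enum (σ₂ α)).length := fun α =>
      le_trans (le_trans (cntEnv_le_cntG α g (τ :: Δ)) (hs₂ α)) (card_hasTy_le _)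
    have hsz₁ : ∀ α, cntEnv α (τ :: Δ) ≤ (enum (σ₁ α)).length := fun α =>
      le_trans (le_trans (cntEnv_le_cntG α g (τ :: Δ)) (hs₁ α)) (card_hasTy_le _)
    apply sum_eq_sum_of_rel hid _ _ _ _ (fun v w => EqPat (τ :: Δ) (v :: δ₁) (w :: δ₂))
    · intro v hv w hw hr
      exact ih σ₁ σ₂ (v :: δ₁) (w :: δ₂)
        (List.Forall₂.cons ((mem_enum _ _).mp hv) ht₁)
        (List.Forall₂.cons ((mem_enum _ _).mp hw) ht₂)
        hr (fun α => hs₁ α) (fun α => hs₂ α)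
    · intro v hv
      obtain ⟨w, hwty, hr⟩ := transport τ ht₁ ht₂ hp hsz₂ v ((mem_enum _ _).mp hv)
      exact ⟨w, (mem_enum _ _).mpr hwty, hr⟩
    · intro w hw
      obtain ⟨v, hvty, hr⟩ := transport τ ht₂ ht₁ (eqPat_symm hp) hsz₁ w ((mem_enum _ _).mp hw)
      exact ⟨v, (mem_enum _ _).mpr hvty, eqPat_symm hr⟩
  | @eq Δ t₁ t₂ τ htm₁ htm₂ =>
    simp only [denG2]
    exact if_congr (denT_eq_iff htm₁ htm₂ ht₁ ht₂ hp) rfl rfl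
  | @neq Δ t₁ t₂ τ htm₁ htm₂ =>
    simp only [denG2]
    exact if_congr (denT_eq_iff htm₁ htm₂ ht₁ ht₂ hp) rfl rfl
  | @call Δ R ts hts =>
    exact hγ Δ δ₁ δ₂ hp R ts
  | factor => rfl
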